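/- arXiv:0903.2773 — 4 statements merged into one kernel-verified Lean document; each statement's English description precedes it below -/
import Mathlib

section
/- Let L be a rank r geometric lattice with complete flag F = {0̂ = F_0 < F_1 < ⋯ < F_r = 1̂}, and define A_i = coat(F_i) \ coat(F_{i+1}) for 0 ≤ i ≤ r−1, where coat(X) is the set of coatoms of L that are ≥ X. Then each A_i is nonempty and {A_0, …, A_{r−1}} is a partition of the set of coatoms of L. -/
/-- A geometric lattice: a finite ranked lattice in which every element is a
join of atoms and the rank function is semimodular. -/
structure IsGeometricLattice (L : Type*) [Lattice L] [BoundedOrder L] [Finite L]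
    (rk : L → ℕ) : Prop where
  rank_bot : rk ⊥ = 0
  rank_strictMono : StrictMono rk
  rank_covBy : ∀ x y : L, x ⋖ y → rk y = rk x + 1
  atomistic : ∀ x : L, ∃ s : Finset L, (∀ a ∈ s, IsAtom a) ∧ x = s.sup id
  semimodular : ∀ x y : L, rk (x ⊓ y) + rk (x ⊔ y) ≤ rk x + rk y

/-- The set of coatoms of `L` lying above `X`. -/
def coatomsAbove {L : Type*} [Lattice L] [BoundedOrder L] (X : L) : Set L :=
  {C | IsCoatom C ∧ X ≤ C}

/-- A complete flag `⊥ = F 0 ⋖ F 1 ⋖ ⋯ ⋖ F r = ⊤` (a maximal chain) in a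
rank `r` lattice, recorded as a sequence of covers. -/
def IsCompleteFlag {L : Type*} [Lattice L] [BoundedOrder L] {r : ℕ}
    (F : Fin (r + 1) → L) : Prop :=
  F 0 = ⊥ ∧ F (Fin.last r) = ⊤ ∧ ∀ i : Fin r, F i.castSucc ⋖ F i.succ

/-!
The sets `coat(F i)` decrease along the flag from all coatoms (`F 0 = ⊥`) to none (`F r = ⊤`),
so their successive differences partition the coatoms: a coatom lies in exactly the `A i` where
the flag first leaves it. Nonemptiness of `A i` is the geometric input: pick an atom `a ≤ F (i+1)`
with `a ≰ F i` and a maximal `C ≥ F i` avoiding `a`. Semimodularity makes `C ⋖ C ⊔ a`, and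
atomicity of `⊤` together with maximality of `C` forces `C ⊔ a = ⊤`, so `C` is a coatom.
-/

theorem Fin.exists_castSucc_and_not_succ {r : ℕ} (P : Fin (r + 1) → Prop) (h0 : P 0)
    (hlast : ¬ P (Fin.last r)) : ∃ i : Fin r, P i.castSucc ∧ ¬ P i.succ := by
  induction r with
  | zero => exact absurd h0 hlast
  | succ r ih =>
    by_cases h1 : P (Fin.succ 0)
    · obtain ⟨i, hi, hi'⟩ := ih (fun j => P j.succ) h1 hlast
      exact ⟨i.succ, by rwa [← Fin.succ_castSucc], hi'⟩
    · exact ⟨0, h0, h1⟩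

section Antitone

variable {α : Type*} {r : ℕ} {S : Fin (r + 1) → Set α}

theorem Antitone.pairwise_disjoint_sdiff_succ (hS : Antitone S) :
    Pairwise fun i j : Fin r => Disjoint (S i.castSucc \ S i.succ) (S j.castSucc \ S j.succ) := by
  have key : ∀ i j : Fin r, i < j →
      Disjoint (S i.castSucc \ S i.succ) (S j.castSucc \ S j.succ) := fun i j hij =>
    Set.disjoint_left.mpr fun _ hi hj => hi.2 (hS (Fin.succ_le_castSucc_iff.mpr hij) hj.1)
  intro i j hij
  rcases hij.lt_or_gt with h | h
  · exact key i j h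
  · exact (key j i h).symm

theorem Antitone.iUnion_sdiff_succ (hS : Antitone S) :
    ⋃ i : Fin r, S i.castSucc \ S i.succ = S 0 \ S (Fin.last r) := by
  ext x
  simp only [Set.mem_iUnion, Set.mem_sdiff]
  constructor
  · rintro ⟨i, hi, hi'⟩
    exact ⟨hS (Fin.zero_le _) hi, fun h => hi' (hS (Fin.le_last _) h)⟩
  · rintro ⟨h0, hlast⟩
    exact Fin.exists_castSucc_and_not_succ (x ∈ S ·) h0 hlast

end Antitone

section coatomsAbove

variable {L : Type*} [Lattice L] [BoundedOrder L]

theorem coatomsAbove_antitone : Antitone (coatomsAbove (L := L)) :=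
  fun _ _ hXY _ hC => ⟨hC.1, hXY.trans hC.2⟩

theorem coatomsAbove_bot : coatomsAbove (⊥ : L) = {C | IsCoatom C} := by
  simp [coatomsAbove]

theorem coatomsAbove_top : coatomsAbove (⊤ : L) = ∅ :=
  Set.eq_empty_of_forall_notMem fun _ hC => hC.1.1 (top_le_iff.mp hC.2)

end coatomsAbove

namespace IsGeometricLattice

variable {L : Type*} [Lattice L] [BoundedOrder L] [Finite L] {rk : L → ℕ}
  (hL : IsGeometricLattice L rk)
include hL

theorem rank_eq_one_of_isAtom {a : L} (ha : IsAtom a) : rk a = 1 := by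
  simpa [hL.rank_bot] using hL.rank_covBy ⊥ a ha.bot_covBy

theorem covBy_sup_of_isAtom {x a : L} (ha : IsAtom a) (hax : ¬ a ≤ x) : x ⋖ x ⊔ a := by
  have hinf : x ⊓ a = ⊥ :=
    (ha.le_iff.mp inf_le_right).resolve_right fun h => hax (h ▸ inf_le_left)
  have hrank := hL.semimodular x a
  rw [hinf, hL.rank_bot, hL.rank_eq_one_of_isAtom ha] at hrank
  refine ⟨left_lt_sup.mpr hax, fun z hxz hza => ?_⟩
  have := hL.rank_strictMono hxz
  have := hL.rank_strictMono hza
  omega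

theorem exists_isAtom_le_not_le {x y : L} (hxy : x < y) :
    ∃ a, IsAtom a ∧ a ≤ y ∧ ¬ a ≤ x := by
  obtain ⟨s, hs, rfl⟩ := hL.atomistic y
  by_contra! h
  exact hxy.not_ge (Finset.sup_le_iff.mpr fun a ha => h a (hs a ha) (Finset.le_sup (f := id) ha))

theorem isCoatom_of_maximal_not_ge {a C : L} (ha : IsAtom a) (hC : Maximal (¬ a ≤ ·) C) :
    IsCoatom C := by
  have hCa := hL.covBy_sup_of_isAtom ha hC.prop
  suffices hsup : C ⊔ a = ⊤ from covBy_top_iff.mp (hsup ▸ hCa)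
  by_contra hne
  obtain ⟨b, hb, -, hbCa⟩ := hL.exists_isAtom_le_not_le (lt_top_iff_ne_top.mpr hne)
  have hbC : ¬ b ≤ C := fun h => hbCa (h.trans le_sup_left)
  have hCb := hL.covBy_sup_of_isAtom hb hbC
  have haCb : a ≤ C ⊔ b := not_not.mp (hC.not_prop_of_gt hCb.lt)
  have hCab : C ⊔ a ≤ C ⊔ b := sup_le le_sup_left haCb
  have heq : C ⊔ a = C ⊔ b := (hCb.eq_or_eq hCa.le hCab).resolve_left hCa.ne'
  exact hbCa (heq ▸ le_sup_right)

theorem exists_isCoatom_ge_not_ge {x y : L} (hxy : x < y) :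
    ∃ C, IsCoatom C ∧ x ≤ C ∧ ¬ y ≤ C := by
  obtain ⟨a, ha, hay, hax⟩ := hL.exists_isAtom_le_not_le hxy
  obtain ⟨C, hxC, hC⟩ := (Set.toFinite {z : L | ¬ a ≤ z}).exists_le_maximal hax
  exact ⟨C, hL.isCoatom_of_maximal_not_ge ha hC, hxC, fun h => hC.prop (hay.trans h)⟩

end IsGeometricLattice

theorem flag_coatom_partition_general {L : Type*} [Lattice L] [BoundedOrder L] [Finite L]
    {rk : L → ℕ} (hL : IsGeometricLattice L rk) {r : ℕ}
    (F : Fin (r + 1) → L) (hF : IsCompleteFlag F)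
    (A : Fin r → Set L)
    (hA : ∀ i : Fin r, A i = coatomsAbove (F i.castSucc) \ coatomsAbove (F i.succ)) :
    (∀ i : Fin r, (A i).Nonempty) ∧
    (∀ i j : Fin r, i ≠ j → Disjoint (A i) (A j)) ∧
    (⋃ i : Fin r, A i) = {C : L | IsCoatom C} := by
  obtain ⟨hF0, hFlast, hFcov⟩ := hF
  obtain rfl : A = _ := funext hA
  have hFmono : Monotone F := (Fin.strictMono_iff_lt_succ.mpr fun i => (hFcov i).lt).monotone
  have hS : Antitone (coatomsAbove ∘ F) := coatomsAbove_antitone.comp_monotone hFmono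
  refine ⟨fun i => ?_, fun _ _ hij => hS.pairwise_disjoint_sdiff_succ hij, ?_⟩
  · obtain ⟨C, hC, hFC, hFC'⟩ := hL.exists_isCoatom_ge_not_ge (hFcov i).lt
    exact ⟨C, ⟨hC, hFC⟩, fun h => hFC' h.2⟩
  · simpa [hF0, hFlast, coatomsAbove_bot, coatomsAbove_top] using hS.iUnion_sdiff_succ

/-- For a complete flag `F` in a rank `r` geometric lattice, the sets
`A i = coat(F i) \ coat(F (i+1))` are nonempty and partition the coatoms. -/
theorem flag_coatom_partition {L : Type*} [Lattice L] [BoundedOrder L] [Finite L]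
    {rk : L → ℕ} (hL : IsGeometricLattice L rk) {r : ℕ} (hr : rk ⊤ = r)
    (F : Fin (r + 1) → L) (hF : IsCompleteFlag F)
    (A : Fin r → Set L)
    (hA : ∀ i : Fin r, A i = coatomsAbove (F i.castSucc) \ coatomsAbove (F i.succ)) :
    (∀ i : Fin r, (A i).Nonempty) ∧
    (∀ i j : Fin r, i ≠ j → Disjoint (A i) (A j)) ∧
    (⋃ i : Fin r, A i) = {C : L | IsCoatom C} :=
  flag_coatom_partition_general hL F hF A hA
end

section
/- Let L be a rank r geometric lattice with complete flag {0̂ = F_0 < ⋯ < F_r = 1̂}, and A_i = coat(F_i) \ coat(F_{i+1}). For every G ∈ L, the number of indices i ∈ {0, …, r−1} with coat(G) ∩ A_i ≠ ∅ equals corank(G) = r − rank(G). -/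
theorem Fin.sum_succ_tsub_castSucc {r : ℕ} (h : Fin (r + 1) → ℕ) (hh : Monotone h) :
    ∑ i : Fin r, (h i.succ - h i.castSucc) = h (Fin.last r) - h 0 := by
  induction r with
  | zero => simp
  | succ r ih =>
    have hinit := ih (h ∘ Fin.castSucc) (hh.comp Fin.strictMono_castSucc.monotone)
    simp only [Function.comp_apply, Fin.castSucc_zero] at hinit
    rw [Fin.sum_univ_castSucc, ← Fin.succ_last]
    simp only [Fin.succ_castSucc, hinit]
    have h0 : h 0 ≤ h (Fin.last r).castSucc := hh (Fin.zero_le _)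
    have h1 : h (Fin.last r).castSucc ≤ h (Fin.last r).succ := hh (Fin.castSucc_le_succ _)
    omega

open Finset in
theorem Fin.card_filter_lt_succ {r : ℕ} (h : Fin (r + 1) → ℕ) (hh : Monotone h)
    (hstep : ∀ i : Fin r, h i.succ ≤ h i.castSucc + 1) :
    #{i : Fin r | h i.castSucc < h i.succ} = h (Fin.last r) - h 0 := by
  rw [Finset.card_filter, ← Fin.sum_succ_tsub_castSucc h hh]
  refine Finset.sum_congr rfl fun i _ => ?_
  have := hstep i
  have := hh i.castSucc_le_succ
  split_ifs <;> omega

theorem StrictMono.eq_of_le_of_apply_le {α β : Type*} [PartialOrder α] [Preorder β] {f : α → β}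
    (hf : StrictMono f) {x y : α} (hxy : x ≤ y) (h : f y ≤ f x) : x = y :=
  by_contra fun hne => (hf (hxy.lt_of_ne hne)).not_ge h

namespace IsGeometricLattice

variable {L : Type*} [Lattice L] [BoundedOrder L] [Finite L] {rk : L → ℕ}

theorem exists_atom_le_not_le (hL : IsGeometricLattice L rk) {x y : L} (h : ¬ x ≤ y) :
    ∃ a, IsAtom a ∧ a ≤ x ∧ ¬ a ≤ y := by
  obtain ⟨s, hs, rfl⟩ := hL.atomistic x
  by_contra! H
  exact h (Finset.sup_le fun a ha => H a (hs a ha) (Finset.le_sup (f := id) ha))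

theorem rank_sup_le_of_covBy (hL : IsGeometricLattice L rk) {x y : L} (hxy : x ⋖ y) (z : L) :
    rk (z ⊔ y) ≤ rk (z ⊔ x) + 1 := by
  have hsm := hL.semimodular (z ⊔ x) y
  have hinf : rk x ≤ rk ((z ⊔ x) ⊓ y) :=
    hL.rank_strictMono.monotone (le_inf le_sup_right hxy.le)
  rw [sup_assoc, sup_eq_right.mpr hxy.le, hL.rank_covBy x y hxy] at hsm
  omega

theorem exists_coatom_ge_not_ge (hL : IsGeometricLattice L rk) {X y : L}
    (hyX : ¬ y ≤ X) : ∃ C, IsCoatom C ∧ X ≤ C ∧ ¬ y ≤ C := by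
  obtain ⟨Y, hXY, hY⟩ := Finite.exists_le_maximal (p := fun Y => ¬ y ≤ Y) hyX
  have above : ∀ Z, Y < Z → y ≤ Z := fun Z hYZ =>
    by_contra fun hyZ => hYZ.not_ge (hY.2 hyZ hYZ.le)
  refine ⟨Y, ⟨fun h => hY.1 (h ▸ le_top), fun Z hYZ => ?_⟩, hXY, hY.1⟩
  by_contra hZ
  obtain ⟨b, hb, -, hbZ⟩ := hL.exists_atom_le_not_le (x := ⊤) (y := Z) (hZ ∘ top_le_iff.mp)
  have hyb : y ≤ Y ⊔ b := above _ (left_lt_sup.mpr fun hbY => hbZ (hbY.trans hYZ.le))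
  -- `Y ⊔ y ≤ Y ⊔ b`, and both have rank `rk Y + 1`, so `b ≤ Y ⊔ y ≤ Z`
  have hline : Y ⊔ y = Y ⊔ b := by
    refine hL.rank_strictMono.eq_of_le_of_apply_le (sup_le le_sup_left hyb) ?_
    have hYy := hL.rank_strictMono (left_lt_sup.mpr hY.1)
    have hYb := hL.rank_sup_le_of_covBy hb.bot_covBy Y
    rw [sup_bot_eq] at hYb
    omega
  exact hbZ (le_sup_right.trans (hline ▸ sup_le hYZ.le (above Z hYZ)))

theorem exists_mem_coatomsAbove_not_le_iff (hL : IsGeometricLattice L rk) {X y : L} :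
    (∃ C ∈ coatomsAbove X, ¬ y ≤ C) ↔ ¬ y ≤ X := by
  refine ⟨fun ⟨C, ⟨_, hXC⟩, hyC⟩ hyX => hyC (hyX.trans hXC), fun hyX => ?_⟩
  obtain ⟨C, hC, hXC, hyC⟩ := hL.exists_coatom_ge_not_ge hyX
  exact ⟨C, ⟨hC, hXC⟩, hyC⟩

theorem inter_coatomsAbove_diff_nonempty_iff (hL : IsGeometricLattice L rk) (G : L) {x y : L}
    (hxy : x ≤ y) :
    (coatomsAbove G ∩ (coatomsAbove x \ coatomsAbove y)).Nonempty ↔ rk (G ⊔ x) < rk (G ⊔ y) := by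
  have hparts : (coatomsAbove G ∩ (coatomsAbove x \ coatomsAbove y)).Nonempty
      ↔ ∃ C ∈ coatomsAbove (G ⊔ x), ¬ y ≤ C := by
    refine exists_congr fun C => ?_
    simp only [coatomsAbove, Set.mem_inter_iff, Set.mem_sdiff, Set.mem_ofPred_eq, sup_le_iff]
    tauto
  rw [hparts, hL.exists_mem_coatomsAbove_not_le_iff]
  have hle : G ⊔ x ≤ G ⊔ y := sup_le_sup_left hxy G
  constructor
  · intro hy
    exact hL.rank_strictMono (hle.lt_of_ne fun h => hy (le_sup_right.trans h.ge))
  · intro hlt hy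
    exact hlt.not_ge (hL.rank_strictMono.monotone (sup_le le_sup_left hy))

end IsGeometricLattice

/-- The number of indices `i` with `coat(G) ∩ A i ≠ ∅` equals the corank of `G`. -/
theorem card_nonempty_parts_eq_corank {L : Type*} [Lattice L] [BoundedOrder L] [Finite L]
    {rk : L → ℕ} (hL : IsGeometricLattice L rk) {r : ℕ} (hr : rk ⊤ = r)
    (F : Fin (r + 1) → L) (hF : IsCompleteFlag F)
    (A : Fin r → Set L)
    (hA : ∀ i : Fin r, A i = coatomsAbove (F i.castSucc) \ coatomsAbove (F i.succ))
    (G : L) :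
    {i : Fin r | (coatomsAbove G ∩ A i).Nonempty}.ncard = r - rk G := by
  obtain ⟨hF0, hFlast, hFcov⟩ := hF
  have hFmono : Monotone F := Fin.monotone_iff_le_succ.mpr fun i => (hFcov i).le
  set h : Fin (r + 1) → ℕ := fun i => rk (G ⊔ F i) with h_def
  have hmono : Monotone h := fun i j hij =>
    hL.rank_strictMono.monotone (sup_le_sup_left (hFmono hij) G)
  have hparts : {i : Fin r | (coatomsAbove G ∩ A i).Nonempty}
      = ↑({i | h i.castSucc < h i.succ} : Finset (Fin r)) := by
    ext i
    simp only [hA, hL.inter_coatomsAbove_diff_nonempty_iff G (hFcov i).le, Set.mem_ofPred_eq,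
      Finset.coe_filter, Finset.mem_univ, true_and, h_def]
  rw [hparts, Set.ncard_coe_finset,
    Fin.card_filter_lt_succ h hmono fun i => hL.rank_sup_le_of_covBy (hFcov i) G]
  simp only [h_def, hFlast, hF0, sup_top_eq, sup_bot_eq, hr]
end

section
/- Let C and D be finite simplicial complexes such that the nerve of the collection of maximal faces of C is isomorphic to the nerve of the collection of maximal faces of D. Then the geometric realizations of C and D are homotopy equivalent. -/
open Geometry

/-- The maximal faces of a simplicial complex. -/
def maxFaces {E : Type*} [AddCommGroup E] [Module ℝ E]
    (C : SimplicialComplex ℝ E) : Set (Finset E) :=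
  {s | s ∈ C.faces ∧ ∀ t ∈ C.faces, s ⊆ t → s = t}

/-!
Send each vertex `v` of `C` to a vertex `φ v` common to all maximal faces `e s`, where `s` runs
over the maximal faces of `C` containing `v`; it exists by the nerve condition, `v` itself being
common to these `s`. Then `φ` maps every maximal face `s` into `e s`, so it is a simplicial map,
and the vertex map `ψ` obtained in the same way from `e.symm` maps `e s` back into `s`. Hence a
face `σ ⊆ s` and its image under `ψ ∘ φ` span a common face, i.e. `ψ ∘ φ` is contiguous to the
identity, and the straight-line homotopy from the affine extension of `ψ ∘ φ` to the identity
stays inside `C`. The same holds for `φ ∘ ψ` on `D`.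
-/

open Finset

theorem ContinuousMap.homotopic_of_segment_subset {X V : Type*} [TopologicalSpace X]
    [AddCommGroup V] [TopologicalSpace V] [IsTopologicalAddGroup V] [Module ℝ V]
    [ContinuousSMul ℝ V] {S : Set V} {f g : C(X, S)}
    (h : ∀ x, segment ℝ (f x : V) (g x) ⊆ S) : f.Homotopic g := by
  let H := ContinuousMap.Homotopy.affine ⟨fun x => (f x : V), by fun_prop⟩
    ⟨fun x => (g x : V), by fun_prop⟩
  exact ⟨{ toFun p := ⟨H p, h p.2 (lineMap_mem_segment ℝ _ _ p.1.2)⟩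
           continuous_toFun := H.continuous.subtype_mk _
           map_zero_left x := Subtype.ext (H.apply_zero x)
           map_one_left x := Subtype.ext (H.apply_one x) }⟩

theorem exists_forall_mapsTo_of_nerve {ι α β : Type*} [Finite ι] (A : ι → Set α)
    (B : ι → Set β) (h : ∀ J : Finset ι, (∃ v, ∀ i ∈ J, v ∈ A i) → ∃ w, ∀ i ∈ J, w ∈ B i) :
    ∃ φ : α → β, ∀ i, Set.MapsTo φ (A i) (B i) := by
  classical
  have := Fintype.ofFinite ι
  choose φ hφ using fun v => h {i | v ∈ A i} ⟨v, fun i hi => (mem_filter.1 hi).2⟩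
  exact ⟨φ, fun i v hv => hφ v i (mem_filter.2 ⟨mem_univ i, hv⟩)⟩

section

variable {E F : Type*} [NormedAddCommGroup E] [NormedSpace ℝ E]
  [NormedAddCommGroup F] [NormedSpace ℝ F]

noncomputable def Finset.affineBasisOfAffineIndependent (σ : Finset E) [Nonempty σ]
    (h : AffineIndependent ℝ ((↑) : σ → E)) :
    AffineBasis σ ℝ (affineSpan ℝ (σ : Set E)) where
  toFun v := ⟨v, subset_affineSpan ℝ _ v.2⟩
  ind' := AffineIndependent.of_comp (affineSpan ℝ (σ : Set E)).subtype h
  tot' := by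
    convert affineSpan_coe_preimage_eq_top (k := ℝ) (σ : Set E)
    ext ⟨x, hx⟩
    simp

structure IsBarycentric (σ : Finset E) (g : E → ℝ) (x : E) : Prop where
  nonneg : ∀ v, 0 ≤ g v
  eq_zero_of_notMem : ∀ v ∉ σ, g v = 0
  sum_eq_one : ∑ v ∈ σ, g v = 1
  sum_smul_eq : ∑ v ∈ σ, g v • v = x

theorem exists_isBarycentric_of_mem_convexHull {σ : Finset E} {x : E}
    (hx : x ∈ convexHull ℝ (σ : Set E)) : ∃ g, IsBarycentric σ g x := by
  classical
  obtain ⟨w, hw0, hw1, hwx⟩ := Finset.mem_convexHull'.1 hx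
  refine ⟨fun v => if v ∈ σ then w v else 0,
    ⟨fun v => ?_, fun v hv => if_neg hv, ?_, ?_⟩⟩
  · split_ifs with hv
    exacts [hw0 v hv, le_rfl]
  · rwa [sum_congr rfl fun v hv => if_pos hv]
  · rwa [sum_congr rfl fun v hv => by rw [if_pos hv]]

namespace IsBarycentric

variable {σ τ : Finset E} {g h : E → ℝ} {x : E}

theorem mem_convexHull (hg : IsBarycentric σ g x) : x ∈ convexHull ℝ (σ : Set E) :=
  Finset.mem_convexHull'.2 ⟨g, fun v _ => hg.nonneg v, hg.sum_eq_one, hg.sum_smul_eq⟩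

theorem mono (hg : IsBarycentric σ g x) (hστ : σ ⊆ τ) : IsBarycentric τ g x where
  nonneg := hg.nonneg
  eq_zero_of_notMem v hv := hg.eq_zero_of_notMem v fun hvσ => hv (hστ hvσ)
  sum_eq_one := by
    rw [← hg.sum_eq_one]
    exact (sum_subset hστ fun v _ hv => hg.eq_zero_of_notMem v hv).symm
  sum_smul_eq := by
    rw [← hg.sum_smul_eq]
    exact (sum_subset hστ fun v _ hv => by rw [hg.eq_zero_of_notMem v hv, zero_smul]).symm

theorem coord_eq [Nonempty σ] (hσ : AffineIndependent ℝ ((↑) : σ → E))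
    (hg : IsBarycentric σ g x) (v : σ) :
    (σ.affineBasisOfAffineIndependent hσ).coord v
      ⟨x, convexHull_subset_affineSpan _ hg.mem_convexHull⟩ = g v := by
  have hsum : ∑ i : σ, g i = 1 := (sum_coe_sort σ g).trans hg.sum_eq_one
  suffices (⟨x, _⟩ : affineSpan ℝ (σ : Set E)) =
      univ.affineCombination ℝ (σ.affineBasisOfAffineIndependent hσ) (fun i => g i) by
    rw [this, AffineBasis.coord_apply_combination_of_mem _ (mem_univ v) hsum]
  apply Subtype.ext
  rw [← AffineSubspace.subtype_apply (univ.affineCombination ℝ _ _),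
    Finset.map_affineCombination _ _ _ hsum, affineCombination_eq_linear_combination _ _ _ hsum]
  exact hg.sum_smul_eq.symm.trans (sum_coe_sort σ fun v => g v • v).symm

theorem eq_of_affineIndependent (hσ : AffineIndependent ℝ ((↑) : σ → E))
    (hg : IsBarycentric σ g x) (hh : IsBarycentric σ h x) : g = h := by
  funext v
  by_cases hv : v ∈ σ
  · have : Nonempty σ := ⟨⟨v, hv⟩⟩
    rw [← hg.coord_eq hσ ⟨v, hv⟩, ← hh.coord_eq hσ ⟨v, hv⟩]
  · rw [hg.eq_zero_of_notMem v hv, hh.eq_zero_of_notMem v hv]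

end IsBarycentric

namespace Geometry.SimplicialComplex

variable (K : SimplicialComplex ℝ E) {σ τ : Finset E} {g h : E → ℝ}

theorem isBarycentric_unique {x : E} (hσ : σ ∈ K.faces) (hτ : τ ∈ K.faces)
    (hg : IsBarycentric σ g x) (hh : IsBarycentric τ h x) : g = h := by
  classical
  have hx : x ∈ convexHull ℝ ((σ ∩ τ : Finset E) : Set E) := by
    rw [coe_inter, ← K.convexHull_inter_convexHull hσ hτ]
    exact ⟨hg.mem_convexHull, hh.mem_convexHull⟩
  obtain ⟨r, hr⟩ := exists_isBarycentric_of_mem_convexHull hx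
  calc g = r := hg.eq_of_affineIndependent (K.indep hσ) (hr.mono inter_subset_left)
    _ = h := (hr.mono inter_subset_right).eq_of_affineIndependent (K.indep hτ) hh

theorem exists_isBarycentric (x : K.space) : ∃ g, ∃ σ ∈ K.faces, IsBarycentric σ g x := by
  obtain ⟨σ, hσ, hx⟩ := mem_space_iff.1 x.2
  obtain ⟨g, hg⟩ := exists_isBarycentric_of_mem_convexHull hx
  exact ⟨g, σ, hσ, hg⟩

noncomputable def baryCoord (x : K.space) : E → ℝ := (K.exists_isBarycentric x).choose

theorem baryCoord_eq {x : K.space} (hσ : σ ∈ K.faces) (hg : IsBarycentric σ g x) :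
    K.baryCoord x = g :=
  have ⟨_, hτ, hb⟩ := (K.exists_isBarycentric x).choose_spec
  K.isBarycentric_unique hτ hσ hb hg

theorem isBarycentric_baryCoord {x : K.space} (hσ : σ ∈ K.faces)
    (hx : (x : E) ∈ convexHull ℝ (σ : Set E)) : IsBarycentric σ (K.baryCoord x) x :=
  have ⟨_, hg⟩ := exists_isBarycentric_of_mem_convexHull hx
  K.baryCoord_eq hσ hg ▸ hg

theorem continuousOn_baryCoord (hσ : σ ∈ K.faces) (v : E) :
    ContinuousOn (fun x : K.space => K.baryCoord x v)
      (Subtype.val ⁻¹' convexHull ℝ (σ : Set E)) := by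
  by_cases hv : v ∈ σ
  · have : Nonempty σ := ⟨⟨v, hv⟩⟩
    have := finiteDimensional_direction_affineSpan_of_finite ℝ σ.finite_toSet
    rw [continuousOn_iff_continuous_domRestrict]
    have hcoord : (Subtype.val ⁻¹' convexHull ℝ (σ : Set E)).domRestrict
        (fun x : K.space => K.baryCoord x v) = fun x =>
          (σ.affineBasisOfAffineIndependent (K.indep hσ)).coord ⟨v, hv⟩
            ⟨x.1, convexHull_subset_affineSpan _ x.2⟩ := by
      funext x
      exact ((K.isBarycentric_baryCoord hσ x.2).coord_eq (K.indep hσ) ⟨v, hv⟩).symm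
    rw [hcoord]
    exact (continuous_barycentric_coord _ _).comp (by fun_prop)
  · refine (continuousOn_const (c := (0 : ℝ))).congr fun x hx => ?_
    exact (K.isBarycentric_baryCoord hσ hx).eq_zero_of_notMem v hv

theorem continuous_baryCoord (hK : K.faces.Finite) (v : E) :
    Continuous fun x : K.space => K.baryCoord x v := by
  refine LocallyFinite.continuous (locallyFinite_of_finite
    fun σ : hK.toFinset => Subtype.val ⁻¹' convexHull ℝ ((σ : Finset E) : Set E)) ?_ ?_ ?_
  · refine Set.eq_univ_of_forall fun x => Set.mem_iUnion.2 ?_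
    obtain ⟨σ, hσ, hx⟩ := mem_space_iff.1 x.2
    exact ⟨⟨σ, hK.mem_toFinset.2 hσ⟩, hx⟩
  · exact fun σ => (((σ : Finset E).finite_toSet.isCompact_convexHull ℝ).isClosed).preimage
      continuous_subtype_val
  · exact fun σ => K.continuousOn_baryCoord (hK.mem_toFinset.1 σ.2) v

theorem sum_baryCoord_smul_mem_convexHull_image [DecidableEq E] [DecidableEq F]
    (hK : K.faces.Finite) (φ : E → F) (hσ : σ ∈ K.faces) {x : K.space}
    (hx : (x : E) ∈ convexHull ℝ (σ : Set E)) :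
    ∑ v ∈ hK.toFinset.sup id, K.baryCoord x v • φ v ∈ convexHull ℝ (σ.image φ : Set F) := by
  have hb := K.isBarycentric_baryCoord hσ hx
  rw [← sum_subset (le_sup (f := id) (hK.mem_toFinset.2 hσ))
    fun v _ hv => by rw [hb.eq_zero_of_notMem v hv, zero_smul]]
  exact (convex_convexHull ℝ _).sum_mem (fun v _ => hb.nonneg v) hb.sum_eq_one
    fun v hv => subset_convexHull ℝ _ (mem_coe.2 (mem_image_of_mem φ hv))

noncomputable def affineExtension [DecidableEq E] [DecidableEq F] (L : SimplicialComplex ℝ F)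
    (hK : K.faces.Finite) (φ : E → F) (hφ : ∀ σ ∈ K.faces, σ.image φ ∈ L.faces) :
    C(K.space, L.space) where
  toFun x := ⟨∑ v ∈ hK.toFinset.sup id, K.baryCoord x v • φ v,
    have ⟨σ, hσ, hx⟩ := mem_space_iff.1 x.2
    L.convexHull_subset_space (hφ σ hσ) (K.sum_baryCoord_smul_mem_convexHull_image hK φ hσ hx)⟩
  continuous_toFun := by
    have := K.continuous_baryCoord hK
    fun_prop

variable {L : SimplicialComplex ℝ F}

theorem affineExtension_mem_convexHull_image [DecidableEq E] [DecidableEq F]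
    (hK : K.faces.Finite) {φ : E → F} (hφ : ∀ σ ∈ K.faces, σ.image φ ∈ L.faces)
    (hσ : σ ∈ K.faces) {x : K.space} (hx : (x : E) ∈ convexHull ℝ (σ : Set E)) :
    (K.affineExtension L hK φ hφ x : F) ∈ convexHull ℝ (σ.image φ : Set F) :=
  K.sum_baryCoord_smul_mem_convexHull_image hK φ hσ hx

variable {K}

theorem affineExtension_comp_homotopic_id [DecidableEq E] [DecidableEq F]
    (hK : K.faces.Finite) (hL : L.faces.Finite) {φ : E → F} {ψ : F → E}
    (hφ : ∀ σ ∈ K.faces, σ.image φ ∈ L.faces) (hψ : ∀ τ ∈ L.faces, τ.image ψ ∈ K.faces)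
    (hcontig : ∀ σ ∈ K.faces, ∃ ρ ∈ K.faces, σ ⊆ ρ ∧ (σ.image φ).image ψ ⊆ ρ) :
    ((L.affineExtension K hL ψ hψ).comp (K.affineExtension L hK φ hφ)).Homotopic
      (ContinuousMap.id K.space) := by
  refine ContinuousMap.homotopic_of_segment_subset fun x => ?_
  obtain ⟨σ, hσ, hx⟩ := mem_space_iff.1 x.2
  obtain ⟨ρ, hρ, hσρ, hφψρ⟩ := hcontig σ hσ
  have hfx := K.affineExtension_mem_convexHull_image hK hφ hσ hx
  have hgfx := L.affineExtension_mem_convexHull_image hL hψ (hφ σ hσ) hfx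
  refine ((convex_convexHull ℝ _).segment_subset ?_ ?_).trans (K.convexHull_subset_space hρ)
  · exact convexHull_mono (coe_subset.2 hφψρ) hgfx
  · exact convexHull_mono (coe_subset.2 hσρ) hx

theorem exists_maxFaces_superset (hK : K.faces.Finite) (hσ : σ ∈ K.faces) :
    ∃ s ∈ maxFaces K, σ ⊆ s := by
  obtain ⟨s, ⟨hs, hσs⟩, hmax⟩ := hK.subset (fun τ hτ => hτ.1)
    |>.exists_maximalFor id {τ ∈ K.faces | σ ⊆ τ} ⟨σ, hσ, subset_rfl⟩
  exact ⟨s, ⟨hs, fun t ht hst => le_antisymm hst (hmax ⟨ht, hσs.trans hst⟩ hst)⟩, hσs⟩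

theorem image_mem_faces_of_maxFaces [DecidableEq F] (hK : K.faces.Finite) {φ : E → F}
    (h : ∀ s ∈ maxFaces K, ∃ t ∈ L.faces, Set.MapsTo φ s t) :
    ∀ σ ∈ K.faces, σ.image φ ∈ L.faces := by
  intro σ hσ
  obtain ⟨s, hs, hσs⟩ := exists_maxFaces_superset hK hσ
  obtain ⟨t, ht, hst⟩ := h s hs
  refine L.down_closed ht ?_ ((K.nonempty_of_mem_faces hσ).image φ)
  exact image_subset_iff.2 fun v hv => hst (hσs hv)

theorem exists_face_superset_image_image {β : Type*} [DecidableEq E] [DecidableEq β]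
    (hK : K.faces.Finite) {φ : E → β} {ψ : β → E}
    (h : ∀ s ∈ maxFaces K, ∃ t : Finset β, Set.MapsTo φ s t ∧ Set.MapsTo ψ t s) :
    ∀ σ ∈ K.faces, ∃ ρ ∈ K.faces, σ ⊆ ρ ∧ (σ.image φ).image ψ ⊆ ρ := by
  intro σ hσ
  obtain ⟨s, hs, hσs⟩ := exists_maxFaces_superset hK hσ
  obtain ⟨t, hφ, hψ⟩ := h s hs
  refine ⟨s, hs.1, hσs, image_subset_iff.2 fun w hw => hψ ?_⟩
  obtain ⟨v, hv, rfl⟩ := mem_image.1 hw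
  exact hφ (hσs hv)

end Geometry.SimplicialComplex

end

/-- If two finite simplicial complexes have isomorphic nerves of their families
of maximal faces, then their geometric realizations are homotopy equivalent.
(The nerve of the family of maximal faces records, for each set `J` of maximal
faces, whether the corresponding subcomplexes intersect, i.e. whether the
maximal faces in `J` have a common vertex.) -/
theorem homotopyEquiv_of_maxFaces_nerve_iso
    {E F : Type*} [NormedAddCommGroup E] [NormedSpace ℝ E]
    [NormedAddCommGroup F] [NormedSpace ℝ F]
    (C : SimplicialComplex ℝ E) (D : SimplicialComplex ℝ F)
    (hC : C.faces.Finite) (hD : D.faces.Finite)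
    (e : maxFaces C ≃ maxFaces D)
    (he : ∀ J : Finset (maxFaces C),
      (∃ v : E, ∀ s ∈ J, v ∈ (s : maxFaces C).val) ↔
      (∃ w : F, ∀ s ∈ J, w ∈ (e s).val)) :
    Nonempty (ContinuousMap.HomotopyEquiv C.space D.space) := by
  classical
  have : Finite (maxFaces C) := hC.subset fun _ hs => hs.1
  have : Finite (maxFaces D) := hD.subset fun _ hs => hs.1
  obtain ⟨φ, hφ⟩ := exists_forall_mapsTo_of_nerve (fun s : maxFaces C => (s.1 : Set E))
    (fun s => ((e s).1 : Set F)) fun J => (he J).1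
  obtain ⟨ψ, hψ⟩ := exists_forall_mapsTo_of_nerve (fun t : maxFaces D => (t.1 : Set F))
    (fun t => ((e.symm t).1 : Set E)) fun J hJ => by
      have h := (he (J.image e.symm)).2
      simp only [forall_mem_image, Equiv.apply_symm_apply] at h
      exact h hJ
  have hφD := SimplicialComplex.image_mem_faces_of_maxFaces hC fun s hs =>
    ⟨_, (e ⟨s, hs⟩).2.1, hφ ⟨s, hs⟩⟩
  have hψC := SimplicialComplex.image_mem_faces_of_maxFaces hD fun t ht =>
    ⟨_, (e.symm ⟨t, ht⟩).2.1, hψ ⟨t, ht⟩⟩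
  refine ⟨⟨C.affineExtension D hC φ hφD, D.affineExtension C hD ψ hψC, ?_, ?_⟩⟩
  · refine SimplicialComplex.affineExtension_comp_homotopic_id hC hD hφD hψC <|
      SimplicialComplex.exists_face_superset_image_image hC fun s hs => ⟨_, hφ ⟨s, hs⟩, ?_⟩
    simpa using hψ (e ⟨s, hs⟩)
  · refine SimplicialComplex.affineExtension_comp_homotopic_id hD hC hψC hφD <|
      SimplicialComplex.exists_face_superset_image_image hD fun t ht => ⟨_, hψ ⟨t, ht⟩, ?_⟩
    simpa using hφ (e.symm ⟨t, ht⟩)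
end

section
/- Let L be a rank r geometric lattice with complete flag {0̂ = F_0 < ⋯ < F_r = 1̂} and coatom partition A_i = coat(F_i) \ coat(F_{i+1}). For G ∈ L, define the simplicial complex S_G on the vertex set {H_+, H_− : H ∈ coat(G)} whose maximal faces are the sets W_0 ∪ ⋯ ∪ W_{r−1} where each W_i ∈ {{H_+ : H ∈ coat(G) ∩ A_i}, {H_− : H ∈ coat(G) ∩ A_i}}. Then for all G, H ∈ L, S_G ∩ S_H = S_{G∨H}. -/
/-- The maximal face of `S_G` with sign pattern `ε`: for each `i`, it contains
the vertices `(H, ε i)` for the coatoms `H ≥ G` lying in the part `A i`. -/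
def flagMaxFace {L : Type*} [Lattice L] [BoundedOrder L] {r : ℕ}
    (A : Fin r → Set L) (G : L) (ε : Fin r → Bool) : Set (L × Bool) :=
  {p | ∃ i : Fin r, p.1 ∈ coatomsAbove G ∩ A i ∧ p.2 = ε i}

/-- The simplicial complex `S_G`: its faces are the subsets of the maximal
faces `flagMaxFace A G ε`, `ε ∈ {+,-}^r`. -/
def flagComplex {L : Type*} [Lattice L] [BoundedOrder L] {r : ℕ}
    (A : Fin r → Set L) (G : L) : Set (Set (L × Bool)) :=
  {σ | ∃ ε : Fin r → Bool, σ ⊆ flagMaxFace A G ε}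

/-- For all `G, H ∈ L`, `S_G ∩ S_H = S_{G ⊔ H}`. -/
theorem flagComplex_inter {L : Type*} [Lattice L] [BoundedOrder L] [Finite L]
    {rk : L → ℕ} (hL : IsGeometricLattice L rk) {r : ℕ} (hr : rk ⊤ = r)
    (F : Fin (r + 1) → L) (hF : IsCompleteFlag F)
    (A : Fin r → Set L)
    (hA : ∀ i : Fin r, A i = coatomsAbove (F i.castSucc) \ coatomsAbove (F i.succ))
    (G H : L) :
    flagComplex A G ∩ flagComplex A H = flagComplex A (G ⊔ H) := by
  -- F is monotone
  have hmonoF : Monotone F := by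
    have : StrictMono F := Fin.strictMono_iff_lt_succ.2 fun i => (hF.2.2 i).lt
    exact this.monotone
  have hcoatMono : ∀ {X Y : L}, X ≤ Y → coatomsAbove Y ⊆ coatomsAbove X :=
    fun hXY C hC => ⟨hC.1, hXY.trans hC.2⟩
  -- the parts A i are pairwise disjoint
  have hdisj : ∀ i j : Fin r, ∀ C : L, C ∈ A i → C ∈ A j → i = j := by
    intro i j C hi hj
    by_contra hne
    rcases lt_or_gt_of_ne hne with h | h
    · rw [hA i] at hi; rw [hA j] at hj
      exact hi.2 (hcoatMono (hmonoF (Fin.succ_le_castSucc_iff.2 h)) hj.1)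
    · rw [hA i] at hi; rw [hA j] at hj
      exact hj.2 (hcoatMono (hmonoF (Fin.succ_le_castSucc_iff.2 h)) hi.1)
  have hcoatSup : ∀ C : L, C ∈ coatomsAbove (G ⊔ H) ↔
      C ∈ coatomsAbove G ∧ C ∈ coatomsAbove H := by
    intro C
    constructor
    · rintro ⟨hC, hle⟩
      exact ⟨⟨hC, le_sup_left.trans hle⟩, ⟨hC, le_sup_right.trans hle⟩⟩
    · rintro ⟨⟨hC, h1⟩, ⟨_, h2⟩⟩
      exact ⟨hC, sup_le h1 h2⟩
  ext σ
  constructor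
  · rintro ⟨⟨ε, hε⟩, ⟨δ, hδ⟩⟩
    refine ⟨ε, fun p hp => ?_⟩
    obtain ⟨i, ⟨hiG, hiA⟩, hie⟩ := hε hp
    obtain ⟨j, ⟨hjH, hjA⟩, _⟩ := hδ hp
    cases hdisj i j p.1 hiA hjA
    exact ⟨i, ⟨(hcoatSup p.1).2 ⟨hiG, hjH⟩, hiA⟩, hie⟩
  · rintro ⟨ε, hε⟩
    refine ⟨⟨ε, fun p hp => ?_⟩, ⟨ε, fun p hp => ?_⟩⟩ <;>
      obtain ⟨i, ⟨hiGH, hiA⟩, hie⟩ := hε hp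
    · exact ⟨i, ⟨((hcoatSup p.1).1 hiGH).1, hiA⟩, hie⟩
    · exact ⟨i, ⟨((hcoatSup p.1).1 hiGH).2, hiA⟩, hie⟩
end
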